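/- arXiv:0705.1521 — 6 statements merged into one kernel-verified Lean document; each statement's English description precedes it below -/
import Mathlib

section
/- If a graph G is module-composed, then every induced subgraph of G is also module-composed. -/
open scoped Classical

/-- `M` is a module (homogeneous set) of `G`: every two vertices of `M`
have the same neighbours outside `M`. -/
def SimpleGraph.IsModule {V : Type*} (G : SimpleGraph V) (M : Set V) : Prop :=
  ∀ v₁ ∈ M, ∀ v₂ ∈ M, ∀ w ∉ M, (G.Adj v₁ w ↔ G.Adj v₂ w)

/-- `G` is module-composed: there is a linear ordering `v₀, …, v_{n-1}` of the
vertices such that for every `i ≥ 1` the neighbourhood of `vᵢ` inside the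
induced subgraph on `{v₀, …, v_{i-1}}` is a module of that induced subgraph. -/
def SimpleGraph.ModuleComposed {V : Type*} [Fintype V] (G : SimpleGraph V) : Prop :=
  ∃ e : Fin (Fintype.card V) ≃ V,
    ∀ i : Fin (Fintype.card V), 0 < (i : ℕ) →
      (G.induce {v | ∃ j, j < i ∧ e j = v}).IsModule
        {w : {v | ∃ j, j < i ∧ e j = v} | G.Adj (e i) ↑w}

/-!
Enumerate `S` in the order inherited from a module-composed ordering of `G`. Every prefix of this
enumeration lies inside a prefix of the ordering of `G`, and a module pulls back to a module along
any graph embedding, so the enumeration of `S` is again module-composed.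
-/

theorem Equiv.exists_subsequence_enumerating {V : Type*} [Fintype V] {n : ℕ} (e : Fin n ≃ V)
    (S : Set V) :
    ∃ (g : Fin (Fintype.card S) → Fin n) (f : Fin (Fintype.card S) ≃ S),
      StrictMono g ∧ ∀ i, e (g i) = f i := by
  set T := Finset.univ.filter fun j => e j ∈ S
  have hT : T.card = Fintype.card S := by
    rw [← Fintype.card_subtype]
    exact Fintype.card_congr (e.subtypeEquiv fun _ => Iff.rfl)
  let g := T.orderEmbOfFin hT
  have hgS (i) : e (g i) ∈ S := (Finset.mem_filter.1 (T.orderEmbOfFin_mem hT i)).2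
  let f : Fin (Fintype.card S) → S := fun i => ⟨e (g i), hgS i⟩
  have hf : Function.Injective f := fun i j h =>
    g.injective (e.injective (congrArg Subtype.val h))
  exact ⟨g, .ofBijective f ((Fintype.bijective_iff_injective_and_card f).2 ⟨hf, by simp⟩),
    g.strictMono, fun _ => rfl⟩

namespace SimpleGraph

variable {V W : Type*} {G : SimpleGraph V} {H : SimpleGraph W}

theorem IsModule.comap {M : Set V} (hM : G.IsModule M) (φ : H ↪g G) : H.IsModule (φ ⁻¹' M) :=
  fun v₁ h₁ v₂ h₂ w hw => by simpa only [φ.map_adj_iff] using hM _ h₁ _ h₂ _ hw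

def Embedding.restrictInduce (φ : H ↪g G) {s : Set W} {t : Set V} (h : Set.MapsTo φ s t) :
    H.induce s ↪g G.induce t where
  toFun := h.restrict φ s t
  inj' := h.restrict_inj.2 φ.injective.injOn
  map_rel_iff' := φ.map_adj_iff

def IsModuleComposedOrdering {n : ℕ} (G : SimpleGraph V) (e : Fin n → V) : Prop :=
  ∀ i, (G.induce {v | ∃ j, j < i ∧ e j = v}).IsModule
    {w : {v | ∃ j, j < i ∧ e j = v} | G.Adj (e i) ↑w}

theorem moduleComposed_iff [Fintype V] :
    G.ModuleComposed ↔ ∃ e : Fin (Fintype.card V) ≃ V, G.IsModuleComposedOrdering e := by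
  refine ⟨fun ⟨e, he⟩ => ⟨e, fun i => ?_⟩, fun ⟨e, he⟩ => ⟨e, fun i _ => he i⟩⟩
  rcases Nat.eq_zero_or_pos i with hi | hi
  · rintro ⟨_, j, hj, rfl⟩
    exact absurd hj (by simp [Fin.lt_def, hi])
  · exact he i hi

theorem IsModuleComposedOrdering.comap {m n : ℕ} {e : Fin n → V}
    (he : G.IsModuleComposedOrdering e) (φ : H ↪g G) {g : Fin m → Fin n} (hg : StrictMono g)
    {f : Fin m → W} (hfe : ∀ i, φ (f i) = e (g i)) : H.IsModuleComposedOrdering f := by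
  intro i
  have hmaps : Set.MapsTo φ {w | ∃ j, j < i ∧ f j = w} {v | ∃ j, j < g i ∧ e j = v} := by
    rintro _ ⟨j, hj, rfl⟩
    exact ⟨g j, hg hj, (hfe j).symm⟩
  convert (he (g i)).comap (φ.restrictInduce hmaps) using 1
  ext w
  change H.Adj (f i) w ↔ G.Adj (e (g i)) (φ w)
  rw [← hfe, φ.map_adj_iff]

end SimpleGraph

/-- If a graph `G` is module-composed, then every induced subgraph of `G`
is also module-composed. -/
theorem moduleComposed_induce {V : Type*} [Fintype V] (G : SimpleGraph V)
    (hG : G.ModuleComposed) (S : Set V) :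
    (G.induce S).ModuleComposed := by
  obtain ⟨e, he⟩ := G.moduleComposed_iff.1 hG
  obtain ⟨g, f, hg, hfe⟩ := e.exists_subsequence_enumerating S
  exact (G.induce S).moduleComposed_iff.2
    ⟨f, he.comap (SimpleGraph.Embedding.induce S) hg fun i => (hfe i).symm⟩
end

section
/- For every n ≥ 5, the cycle graph Cₙ is not module-composed. -/
open scoped Classical

/-!
If `v` is the last vertex of a module-composed ordering of `G`, the neighbourhood of `v` is a
module of `G - v`. In `Cₙ` with `n ≥ 5` this fails for every `v`: the vertex `v + 2` is adjacent
to the neighbour `v + 1` of `v` but not to its other neighbour `v - 1`.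
-/

namespace SimpleGraph

variable {V : Type*} {G : SimpleGraph V}

lemma ModuleComposed.exists_isModule_induce_compl [Fintype V] [Nontrivial V]
    (h : G.ModuleComposed) :
    ∃ v, (G.induce {v}ᶜ).IsModule {x : ({v}ᶜ : Set V) | G.Adj v x} := by
  obtain ⟨e, he⟩ := h
  have hcard := Fintype.one_lt_card (α := V)
  let last : Fin (Fintype.card V) := ⟨Fintype.card V - 1, by omega⟩
  have hbefore : {x | ∃ j, j < last ∧ e j = x} = {e last}ᶜ := by
    ext x
    refine ⟨?_, fun hx => ⟨e.symm x, ?_, e.apply_symm_apply x⟩⟩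
    · rintro ⟨j, hj, rfl⟩
      exact e.injective.ne hj.ne
    · have hne : e.symm x ≠ last := fun h => hx (by rw [← h, e.apply_symm_apply]; rfl)
      have hle : e.symm x ≤ last := Fin.le_def.mpr (Nat.le_sub_one_of_lt (e.symm x).isLt)
      exact lt_of_le_of_ne hle hne
  have hlast := he last (show 0 < Fintype.card V - 1 by omega)
  rw [hbefore] at hlast
  exact ⟨e last, hlast⟩

lemma not_isModule_induce_compl_of_adj {v a b w : V} (hva : G.Adj v a) (hvb : G.Adj v b)
    (haw : G.Adj a w) (hvw : ¬G.Adj v w) (hbw : ¬G.Adj b w) :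
    ¬(G.induce {v}ᶜ).IsModule {x : ({v}ᶜ : Set V) | G.Adj v x} := by
  have hwv : w ≠ v := by rintro rfl; exact hbw hvb.symm
  intro hM
  exact hbw ((hM ⟨a, hva.ne'⟩ hva ⟨b, hvb.ne'⟩ hvb ⟨w, hwv⟩ hvw).mp haw)

open Fin.CommRing in
lemma cycleGraph_not_isModule_induce_compl {n : ℕ} (hn : 5 ≤ n) (v : Fin n) :
    ¬((cycleGraph n).induce {v}ᶜ).IsModule
      {x : ({v}ᶜ : Set (Fin n)) | (cycleGraph n).Adj v x} := by
  obtain ⟨m, rfl⟩ : ∃ m, n = m + 3 + 2 := ⟨n - 5, by omega⟩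
  have hcast_ne_zero : ∀ k : ℕ, 0 < k → k < m + 5 → (k : Fin (m + 3 + 2)) ≠ 0 := by
    intro k hk0 hkn
    rw [Ne, Fin.natCast_eq_zero]
    exact fun h => absurd (Nat.le_of_dvd hk0 h) (by omega)
  refine not_isModule_induce_compl_of_adj (a := v + 1) (b := v - 1) (w := v + 2) ?_ ?_ ?_ ?_ ?_
    <;> simp only [cycleGraph_adj]
  · right; ring
  · left; ring
  · right; ring
  · rintro (h | h)
    · exact hcast_ne_zero 3 (by omega) (by omega) (by push_cast; linear_combination -h)
    · exact hcast_ne_zero 1 (by omega) (by omega) (by push_cast; linear_combination h)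
  · rintro (h | h)
    · exact hcast_ne_zero 4 (by omega) (by omega) (by push_cast; linear_combination -h)
    · exact hcast_ne_zero 2 (by omega) (by omega) (by push_cast; linear_combination h)

end SimpleGraph

/-- For every `n ≥ 5`, the cycle graph `Cₙ` is not module-composed. -/
theorem cycleGraph_not_moduleComposed (n : ℕ) (hn : 5 ≤ n) :
    ¬ (SimpleGraph.cycleGraph n).ModuleComposed := by
  have : Nontrivial (Fin n) := Fin.nontrivial_iff_two_le.mpr (by omega)
  intro h
  obtain ⟨v, hv⟩ := h.exists_isModule_induce_compl
  exact SimpleGraph.cycleGraph_not_isModule_induce_compl hn v hv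
end

section
/- For every n ≥ 5, the complement of the cycle graph Cₙ is not module-composed. -/
open scoped Classical

/-!
If `G` is module-composed, the last vertex `v` of the ordering has a neighbourhood that is a module
of `G - v`. Modules of a graph and of its complement coincide, so for `G = Cₙᶜ` the set of
non-neighbours of `v` in `Cₙ`, namely all vertices except `v - 1, v, v + 1`, would be a module of
`Cₙ - v`. For `n ≥ 5` it contains `v + 2` and `v + 3`, and `v + 1` is adjacent in `Cₙ` to the
former but not to the latter.
-/

namespace SimpleGraph

variable {V : Type*}

theorem IsModule.compl {G : SimpleGraph V} {M : Set V} (hM : G.IsModule M) : Gᶜ.IsModule M := by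
  intro v₁ h₁ v₂ h₂ w hw
  have hne : ∀ v ∈ M, v ≠ w := fun v hv hvw => hw (hvw ▸ hv)
  simp only [compl_adj, hne v₁ h₁, hne v₂ h₂, ne_eq, not_false_eq_true, true_and,
    hM v₁ h₁ v₂ h₂ w hw]

theorem isModule_compl_iff {G : SimpleGraph V} {M : Set V} : Gᶜ.IsModule M ↔ G.IsModule M :=
  ⟨fun h => compl_compl G ▸ h.compl, IsModule.compl⟩

theorem induce_compl (G : SimpleGraph V) (s : Set V) : Gᶜ.induce s = (G.induce s)ᶜ := by
  ext a b
  simp [Subtype.ext_iff]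

theorem ModuleComposed.exists_isModule_induce_compl_singleton [Fintype V] [Nontrivial V]
    {G : SimpleGraph V} (hG : G.ModuleComposed) :
    ∃ v, (G.induce {v}ᶜ).IsModule {w | G.Adj v w} := by
  obtain ⟨e, he⟩ := hG
  have hcard := Fintype.one_lt_card (α := V)
  let last : Fin (Fintype.card V) := ⟨Fintype.card V - 1, by omega⟩
  have hbefore : {v | ∃ j, j < last ∧ e j = v} = {e last}ᶜ := by
    ext v
    simp only [Set.mem_ofPred_eq, Set.mem_compl_singleton_iff]
    constructor
    · rintro ⟨j, hj, rfl⟩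
      exact e.injective.ne hj.ne
    · intro hv
      have hne : (e.symm v : ℕ) ≠ last := fun h => hv (by rw [← Fin.ext h, e.apply_symm_apply])
      have hlt := (e.symm v).isLt
      exact ⟨e.symm v, Fin.lt_def.2 (by simp only [last] at hne ⊢; omega),
        e.apply_symm_apply v⟩
  have := he last (by simp only [last]; omega)
  rw [hbefore] at this
  exact ⟨e last, this⟩

theorem cycleGraph_adj_add_iff {n : ℕ} (u k : Fin (n + 2)) :
    (cycleGraph (n + 2)).Adj u (u + k) ↔ k = 1 ∨ k = -1 := by
  rw [cycleGraph_adj, sub_add_cancel_left, add_sub_cancel_left, neg_eq_iff_eq_neg, or_comm]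

theorem not_isModule_induce_cycleGraph_compl_neighbors {n : ℕ} (hn : 5 ≤ n) (v : Fin n) :
    ¬ ((cycleGraph n).induce {v}ᶜ).IsModule {w | (cycleGraph n)ᶜ.Adj v w} := by
  obtain ⟨m, rfl⟩ : ∃ m, n = m + 5 := ⟨n - 5, by omega⟩
  obtain ⟨h10, h20, h21, h2n, h30, h31, h3n⟩ : (1 : Fin (m + 5)) ≠ 0 ∧ (2 : Fin (m + 5)) ≠ 0 ∧
      (2 : Fin (m + 5)) ≠ 1 ∧ (2 : Fin (m + 5)) ≠ -1 ∧ (3 : Fin (m + 5)) ≠ 0 ∧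
      (3 : Fin (m + 5)) ≠ 1 ∧ (3 : Fin (m + 5)) ≠ -1 := by
    simp [Fin.ext_iff, Fin.val_neg, Nat.mod_eq_of_lt]
  have hmem {k : Fin (m + 5)} (hk : k ≠ 0) : v + k ∈ ({v}ᶜ : Set (Fin (m + 5))) := by
    simpa using hk
  have hcompl {k : Fin (m + 5)} (hk : k ≠ 0) (hk₁ : k ≠ 1) (hk₂ : k ≠ -1) :
      (cycleGraph (m + 5))ᶜ.Adj v (v + k) := by
    rw [compl_adj, cycleGraph_adj_add_iff]
    exact ⟨by simpa [eq_comm] using hk, by tauto⟩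
  intro hM
  have h := hM ⟨v + 2, hmem h20⟩ (hcompl h20 h21 h2n) ⟨v + 3, hmem h30⟩ (hcompl h30 h31 h3n)
    ⟨v + 1, hmem h10⟩ (by simp [compl_adj, cycleGraph_adj_add_iff])
  simp only [comap_adj, Function.Embedding.subtype_apply] at h
  rw [show v + 2 = v + 1 + 1 by abel, show v + 3 = v + 1 + 2 by abel] at h
  have h₁₃ := (h.mp ((cycleGraph_adj_add_iff _ _).2 (.inl rfl)).symm).symm
  rw [cycleGraph_adj_add_iff] at h₁₃
  exact h₁₃.elim h21 h2n

end SimpleGraph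

/-- For every `n ≥ 5`, the complement of the cycle graph `Cₙ` is not
module-composed. -/
theorem compl_cycleGraph_not_moduleComposed (n : ℕ) (hn : 5 ≤ n) :
    ¬ (SimpleGraph.cycleGraph n)ᶜ.ModuleComposed := by
  intro hG
  have : Nontrivial (Fin n) := Fin.nontrivial_iff_two_le.2 (by omega)
  obtain ⟨v, hv⟩ := hG.exists_isModule_induce_compl_singleton
  rw [SimpleGraph.induce_compl, SimpleGraph.isModule_compl_iff] at hv
  exact SimpleGraph.not_isModule_induce_cycleGraph_compl_neighbors hn v hv
end

section
/- The complement of the disjoint union of two 4-cycles (co-2C₄) is not module-composed. -/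
open scoped Classical

/-- The disjoint union of two 4-cycles, on vertices `0,…,7`. -/
def twoC4 : SimpleGraph (Fin 8) :=
  SimpleGraph.fromRel (fun a b =>
    (a, b) ∈ [((0 : Fin 8), (1 : Fin 8)), (1, 2), (2, 3), (3, 0),
              (4, 5), (5, 6), (6, 7), (7, 4)])

/-!
In a module-composed graph the last vertex `v` of the ordering sees a module of `G - v`.
In co-2C₄ no vertex does: a vertex `a` of the other 4-cycle and the antipode `b` of `v` in its
own cycle are both neighbours of `v`, but a cycle-neighbour `w` of `v` is adjacent to `a` and
not to `b`.
-/

theorem SimpleGraph.ModuleComposed.exists_adj_iff_of_adj {V : Type*} [Fintype V]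
    {G : SimpleGraph V} (hG : G.ModuleComposed) (hV : 1 < Fintype.card V) :
    ∃ v, ∀ a b w, G.Adj v a → G.Adj v b → w ≠ v → ¬ G.Adj v w →
      (G.Adj a w ↔ G.Adj b w) := by
  obtain ⟨e, he⟩ := hG
  set last : Fin (Fintype.card V) := ⟨Fintype.card V - 1, by omega⟩
  have mem_prefix : ∀ x, x ≠ e last → ∃ j, j < last ∧ e j = x := fun x hx =>
    ⟨e.symm x, lt_of_le_of_ne (Fin.le_def.2 (by simp only [last]; omega))
      fun h => hx (by rw [← h, e.apply_symm_apply]), e.apply_symm_apply x⟩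
  refine ⟨e last, fun a b w ha hb hw hvw => ?_⟩
  exact he last (show 0 < Fintype.card V - 1 by omega) ⟨a, mem_prefix a ha.ne'⟩ ha
    ⟨b, mem_prefix b hb.ne'⟩ hb ⟨w, mem_prefix w hw⟩ hvw

-- Computable adjacency, so that `decide` is not blocked by the classical instance.
instance : DecidableRel twoC4.Adj := fun a b =>
  decidable_of_iff _ (SimpleGraph.fromRel_adj _ a b).symm

theorem compl_twoC4_not_adj_iff_of_adj (v : Fin 8) :
    ¬ ∀ a b w, twoC4ᶜ.Adj v a → twoC4ᶜ.Adj v b → w ≠ v → ¬ twoC4ᶜ.Adj v w →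
      (twoC4ᶜ.Adj a w ↔ twoC4ᶜ.Adj b w) := by
  -- `u + 4` lies in the other cycle, `u ^^^ 2` is the antipode and `u ^^^ 1` a cycle-neighbour
  -- of `u`.
  have witnesses : ∀ u : Fin 8, twoC4ᶜ.Adj u (u + 4) ∧ twoC4ᶜ.Adj u (u ^^^ 2) ∧ u ^^^ 1 ≠ u ∧
      ¬ twoC4ᶜ.Adj u (u ^^^ 1) ∧ twoC4ᶜ.Adj (u + 4) (u ^^^ 1) ∧
      ¬ twoC4ᶜ.Adj (u ^^^ 2) (u ^^^ 1) := by
    decide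
  obtain ⟨ha, hb, hw, hvw, haw, hbw⟩ := witnesses v
  exact fun h => hbw ((h _ _ _ ha hb hw hvw).mp haw)

/-- The complement of two disjoint 4-cycles (co-2C₄) is not module-composed. -/
theorem co_twoC4_not_moduleComposed : ¬ twoC4ᶜ.ModuleComposed := by
  intro hG
  obtain ⟨v, hv⟩ := hG.exists_adj_iff_of_adj (by simp)
  exact compl_twoC4_not_adj_iff_of_adj v hv
end

section
/- A cograph G is module-composed if and only if G contains no induced subgraph isomorphic to co-2C₄ (the complement of two disjoint 4-cycles). -/
/-!
A module-composed ordering restricts to induced subgraphs, and co-2C₄ has none: the last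
vertex `v` of an ordering has neighbours `a`, `b` and a non-neighbour `c` with `a ~ c`, `b ≁ c`.

Conversely, by Seinsche's theorem every set of at least two vertices of a cograph splits into
two nonempty parts with no edges, or all edges, between them. Concatenating orderings of the
parts works for a disjoint union; for a join `A + B` it works as soon as the later part `B` is
ordered so that the earlier neighbours of each vertex are complete to its earlier
non-neighbours. Such orderings exist for 2K₂-free cographs, and since the join of two 2K₂ is
co-2C₄, one side of every join is 2K₂-free.
-/

open scoped Classical

-- A computable instance, so that facts about co-2C₄ can be checked by `decide`.
instance inst_s10 : DecidableRel twoC4.Adj := fun _ _ =>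
  decidable_of_iff' _ (SimpleGraph.fromRel_adj _ _ _)

namespace Finset

variable {V : Type*}

/-- The ranks `r` order `s`; `Q v P` must hold for each `v ∈ s` and the set `P` of its
predecessors. -/
def AdmitsOrder (s : Finset V) (Q : V → Set V → Prop) : Prop :=
  ∃ r : V → ℕ, Set.InjOn r s ∧ ∀ v ∈ s, Q v {x | x ∈ s ∧ r x < r v}

theorem AdmitsOrder.of_card_le_one {s : Finset V} {Q : V → Set V → Prop} (hQ : ∀ v, Q v ∅)
    (hs : #s ≤ 1) : s.AdmitsOrder Q :=
  ⟨fun _ => 0, fun x hx y hy _ => card_le_one.1 hs x hx y hy, fun v _ => by simpa using hQ v⟩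

theorem AdmitsOrder.union {Q Q' : V → Set V → Prop} {A B : Finset V} (hAB : Disjoint A B)
    (hA : A.AdmitsOrder Q) (hB : B.AdmitsOrder Q')
    (hQ : ∀ v ∈ B, ∀ P ⊆ (B : Set V), Q' v P → Q v (A ∪ P)) :
    (A ∪ B).AdmitsOrder Q := by
  obtain ⟨r₁, hr₁, hQ₁⟩ := hA
  obtain ⟨r₂, hr₂, hQ₂⟩ := hB
  set N := A.sup r₁ + 1
  set r : V → ℕ := fun x => if x ∈ A then r₁ x else N + r₂ x
  have hrA : ∀ x ∈ A, r x = r₁ x ∧ r x < N := fun x hx =>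
    ⟨if_pos hx, (if_pos hx).trans_lt (Nat.lt_succ_of_le (le_sup hx))⟩
  have hrB : ∀ x ∈ B, r x = N + r₂ x := fun x hx => if_neg (disjoint_right.1 hAB hx)
  refine ⟨r, ?_, fun v hv => ?_⟩
  · intro x hx y hy hxy
    rcases mem_union.1 hx with hx | hx <;> rcases mem_union.1 hy with hy | hy
    · exact hr₁ hx hy (by rw [← (hrA x hx).1, ← (hrA y hy).1, hxy])
    · have := (hrA x hx).2; have := hrB y hy; omega
    · have := (hrA y hy).2; have := hrB x hx; omega
    · exact hr₂ hx hy (by have := hrB x hx; have := hrB y hy; omega)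
  rcases mem_union.1 hv with hv | hv
  · convert hQ₁ v hv using 1
    ext x
    simp only [Set.mem_ofPred_eq, mem_union]
    constructor
    · rintro ⟨hx | hx, hxv⟩
      · exact ⟨hx, by rwa [← (hrA x hx).1, ← (hrA v hv).1]⟩
      · have := (hrA v hv).2; have := hrB x hx; omega
    · rintro ⟨hx, hxv⟩
      exact ⟨Or.inl hx, by rwa [(hrA x hx).1, (hrA v hv).1]⟩
  · convert hQ v hv _ (fun x hx => hx.1) (hQ₂ v hv) using 1
    ext x
    simp only [Set.mem_ofPred_eq, mem_union, Set.mem_union, mem_coe]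
    constructor
    · rintro ⟨hx | hx, hxv⟩
      · exact Or.inl hx
      · exact Or.inr ⟨hx, by have := hrB x hx; have := hrB v hv; omega⟩
    · rintro (hx | ⟨hx, hxv⟩)
      · exact ⟨Or.inl hx, by have := (hrA x hx).2; have := hrB v hv; omega⟩
      · exact ⟨Or.inr hx, by have := hrB x hx; have := hrB v hv; omega⟩

end Finset

namespace SimpleGraph

open Finset

variable {V W : Type*} {G : SimpleGraph V}

theorem isIndContained_of_adj_iff {H : SimpleGraph W} (f : W → V)
    (hH : ∀ i j, (∀ k, H.Adj i k ↔ H.Adj j k) → i = j)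
    (hf : ∀ i j, G.Adj (f i) (f j) ↔ H.Adj i j) : H ⊴ G :=
  ⟨⟨⟨f, fun i j hij => hH i j fun k => by rw [← hf, ← hf, hij]⟩, hf _ _⟩⟩

theorem pathGraph_four_isIndContained {a b c d : V} (hab : G.Adj a b) (hbc : G.Adj b c)
    (hcd : G.Adj c d) (hac : ¬G.Adj a c) (hbd : ¬G.Adj b d) (had : ¬G.Adj a d) :
    pathGraph 4 ⊴ G := by
  refine isIndContained_of_adj_iff ![a, b, c, d] (by simp only [pathGraph_adj]; decide) ?_
  intro i j
  fin_cases i <;> fin_cases j <;>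
    simp [pathGraph_adj, hab, hbc, hcd, hac, hbd, had, hab.symm, hbc.symm, hcd.symm,
      G.adj_comm c a, G.adj_comm d b, G.adj_comm d a]

theorem not_pathGraph_four_isIndContained_compl (hG : ¬pathGraph 4 ⊴ G) :
    ¬pathGraph 4 ⊴ Gᶜ := by
  intro h
  have hself : pathGraph 4 ⊴ (pathGraph 4)ᶜ :=
    isIndContained_of_adj_iff ![1, 3, 0, 2] (by simp only [pathGraph_adj]; decide)
      (by simp only [compl_adj, pathGraph_adj]; decide)
  have h' := h.compl
  rw [compl_compl] at h'
  exact hG (hself.trans h')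

structure IsSeparation (G : SimpleGraph V) (A B : Finset V) : Prop where
  left_nonempty : A.Nonempty
  right_nonempty : B.Nonempty
  disjoint : Disjoint A B
  not_adj : ∀ x ∈ A, ∀ y ∈ B, ¬G.Adj x y

namespace IsSeparation

variable {A B : Finset V} {u v : V}

theorem symm (h : G.IsSeparation A B) : G.IsSeparation B A :=
  ⟨h.right_nonempty, h.left_nonempty, h.disjoint.symm,
    fun x hx y hy hxy => h.not_adj y hy x hx hxy.symm⟩

theorem left_ssubset (h : G.IsSeparation A B) : A ⊂ A ∪ B := by
  obtain ⟨y, hy⟩ := h.right_nonempty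
  exact subset_union_left.ssubset_of_not_subset fun hsub =>
    disjoint_right.1 h.disjoint hy (hsub (mem_union_right A hy))

theorem adj_of_compl {x y : V} (h : Gᶜ.IsSeparation A B) (hx : x ∈ A) (hy : y ∈ B) :
    G.Adj x y := by
  by_contra hxy
  exact h.not_adj x hx y hy ⟨fun he => Finset.disjoint_left.1 h.disjoint hx (he ▸ hy), hxy⟩

theorem exists_insert_of_not_adj (hG : ¬pathGraph 4 ⊴ G) (h : G.IsSeparation A B)
    (hv : v ∉ A ∪ B) (hu : u ∈ A) (hvu : ¬G.Adj v u) :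
    ∃ A' B', A' ∪ B' = insert v (A ∪ B) ∧ G.IsSeparation A' B' := by
  by_cases hw : ∃ w ∈ B, G.Adj v w
  · obtain ⟨w, hw, hvw⟩ := hw
    -- Cut `A` by adjacency to `v`: an edge `x y` across the cut gives the induced path `x y v w`.
    refine ⟨A.filter (¬G.Adj v ·), insert v (A.filter (G.Adj v ·) ∪ B), ?_,
      ⟨⟨u, mem_filter.2 ⟨hu, hvu⟩⟩, insert_nonempty _ _, ?_, ?_⟩⟩
    · ext x
      simp only [mem_union, mem_insert, mem_filter]
      tauto
    · rw [disjoint_insert_right, disjoint_union_right]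
      refine ⟨fun hvA => hv (mem_union_left B (mem_filter.1 hvA).1), ?_,
        (h.disjoint.mono_left (filter_subset _ A))⟩
      exact disjoint_filter.2 fun x _ h₁ h₂ => h₁ h₂
    · intro x hx y hy hxy
      rw [mem_filter] at hx
      rcases mem_insert.1 hy with rfl | hy
      · exact hx.2 hxy.symm
      rcases mem_union.1 hy with hy | hy
      · rw [mem_filter] at hy
        exact hG (pathGraph_four_isIndContained hxy hy.2.symm hvw (fun h => hx.2 h.symm)
          (h.not_adj y hy.1 w hw) (h.not_adj x hx.1 w hw))
      · exact h.not_adj x hx.1 y hy hxy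
  · push Not at hw
    refine ⟨insert v A, B, insert_union v A B, ⟨insert_nonempty v A, h.right_nonempty,
      disjoint_insert_left.2 ⟨fun hvB => hv (mem_union_right A hvB), h.disjoint⟩, ?_⟩⟩
    intro x hx y hy
    rcases mem_insert.1 hx with rfl | hx
    · exact hw y hy
    · exact h.not_adj x hx y hy

theorem exists_insert (hG : ¬pathGraph 4 ⊴ G) (h : G.IsSeparation A B) (hv : v ∉ A ∪ B) :
    ∃ A' B', A' ∪ B' = insert v (A ∪ B) ∧
      (G.IsSeparation A' B' ∨ Gᶜ.IsSeparation A' B') := by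
  by_cases hall : ∀ y ∈ A ∪ B, G.Adj v y
  · refine ⟨{v}, A ∪ B, (insert_eq v _).symm, Or.inr ⟨singleton_nonempty v,
      h.left_nonempty.mono subset_union_left, disjoint_singleton_left.2 hv, ?_⟩⟩
    intro x hx y hy hxy
    rw [mem_singleton] at hx
    subst hx
    exact ((compl_adj G x y).1 hxy).2 (hall y hy)
  push Not at hall
  obtain ⟨u, hu, hvu⟩ := hall
  rcases mem_union.1 hu with hu | hu
  · obtain ⟨A', B', hAB, h'⟩ := h.exists_insert_of_not_adj hG hv hu hvu
    exact ⟨A', B', hAB, Or.inl h'⟩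
  · obtain ⟨A', B', hAB, h'⟩ :=
      h.symm.exists_insert_of_not_adj hG (by rwa [union_comm]) hu hvu
    exact ⟨A', B', by rw [hAB, union_comm], Or.inl h'⟩

end IsSeparation

theorem exists_isSeparation (hG : ¬pathGraph 4 ⊴ G) (s : Finset V) (hs : 2 ≤ #s) :
    ∃ A B, A ∪ B = s ∧ (G.IsSeparation A B ∨ Gᶜ.IsSeparation A B) := by
  induction s using Finset.induction_on with
  | empty => simp at hs
  | insert v s hv ih =>
    rw [card_insert_of_notMem hv] at hs
    by_cases hs1 : #s = 1
    · obtain ⟨u, rfl⟩ := card_eq_one.1 hs1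
      have hsep : Disjoint {v} {u} := disjoint_singleton.2 fun h => hv (mem_singleton.2 h)
      refine ⟨{v}, {u}, (insert_eq v _).symm, ?_⟩
      by_cases hvu : G.Adj v u
      · exact Or.inr ⟨singleton_nonempty v, singleton_nonempty u, hsep, by simp [hvu]⟩
      · exact Or.inl ⟨singleton_nonempty v, singleton_nonempty u, hsep, by simpa using hvu⟩
    obtain ⟨A, B, rfl, h | h⟩ := ih (by omega)
    · exact h.exists_insert hG hv
    · obtain ⟨A', B', hAB, h'⟩ :=
        h.exists_insert (not_pathGraph_four_isIndContained_compl hG) hv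
      exact ⟨A', B', hAB, by rwa [compl_compl, or_comm] at h'⟩

theorem induction_on_isSeparation (hG : ¬pathGraph 4 ⊴ G) {p : Finset V → Prop}
    (small : ∀ s : Finset V, #s ≤ 1 → p s)
    (sep : ∀ A B, G.IsSeparation A B → p A → p B → p (A ∪ B))
    (join : ∀ A B, Gᶜ.IsSeparation A B → p A → p B → p (A ∪ B)) (s : Finset V) :
    p s := by
  induction s using Finset.strongInduction with
  | H s ih =>
    by_cases hs : #s ≤ 1
    · exact small s hs
    obtain ⟨A, B, rfl, h | h⟩ := exists_isSeparation hG s (by omega)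
    · exact sep A B h (ih A h.left_ssubset) (ih B (union_comm A B ▸ h.symm.left_ssubset))
    · exact join A B h (ih A h.left_ssubset) (ih B (union_comm A B ▸ h.symm.left_ssubset))

def IsNbhdModule (G : SimpleGraph V) (v : V) (P : Set V) : Prop :=
  ∀ a ∈ P, ∀ b ∈ P, ∀ c ∈ P,
    G.Adj v a → G.Adj v b → ¬G.Adj v c → (G.Adj a c ↔ G.Adj b c)

def IsNbhdComplete (G : SimpleGraph V) (v : V) (P : Set V) : Prop :=
  ∀ b ∈ P, ∀ c ∈ P, G.Adj v b → ¬G.Adj v c → G.Adj b c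

section Neighbourhoods

variable {A B : Finset V} {v : V} {P : Set V}

theorem IsNbhdComplete.isNbhdModule (h : G.IsNbhdComplete v P) : G.IsNbhdModule v P :=
  fun a ha b hb c hc hva hvb hvc => iff_of_true (h a ha c hc hva hvc) (h b hb c hc hvb hvc)

theorem isNbhdComplete_of_forall_not_adj (h : ∀ x ∈ P, ¬G.Adj v x) : G.IsNbhdComplete v P :=
  fun b hb _ _ hvb _ => absurd hvb (h b hb)

theorem IsNbhdModule.union_of_not_adj (hAB : ∀ x ∈ A, ∀ y ∈ B, ¬G.Adj x y) (hv : v ∈ B)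
    (hP : P ⊆ B) (h : G.IsNbhdModule v P) : G.IsNbhdModule v (A ∪ P) := by
  intro a ha b hb c hc hva hvb hvc
  have mem_P : ∀ x ∈ (A : Set V) ∪ P, G.Adj v x → x ∈ P := by
    rintro x (hx | hx) hvx
    exacts [absurd hvx.symm (hAB x hx v hv), hx]
  have ha := mem_P a ha hva
  have hb := mem_P b hb hvb
  rcases hc with hc | hc
  · exact iff_of_false (fun h => hAB c hc a (hP ha) h.symm) (fun h => hAB c hc b (hP hb) h.symm)
  · exact h a ha b hb c hc hva hvb hvc

theorem IsNbhdComplete.union_of_adj (hAB : ∀ x ∈ A, ∀ y ∈ B, G.Adj x y) (hv : v ∈ B)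
    (hP : P ⊆ B) (h : G.IsNbhdComplete v P) : G.IsNbhdComplete v (A ∪ P) := by
  intro b hb c hc hvb hvc
  have hc : c ∈ P := by
    rcases hc with hc | hc
    exacts [absurd (hAB c hc v hv).symm hvc, hc]
  rcases hb with hb | hb
  · exact hAB b hb c (hP hc)
  · exact h b hb c hc hvb hvc

end Neighbourhoods

def HasTwoK2 (G : SimpleGraph V) (s : Finset V) : Prop :=
  ∃ a ∈ s, ∃ b ∈ s, ∃ c ∈ s, ∃ d ∈ s,
    G.Adj a b ∧ G.Adj c d ∧ ¬G.Adj a c ∧ ¬G.Adj a d ∧ ¬G.Adj b c ∧ ¬G.Adj b d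

section TwoK2

variable {A B : Finset V}

theorem HasTwoK2.mono (h : G.HasTwoK2 A) (hAB : A ⊆ B) : G.HasTwoK2 B := by
  obtain ⟨a, ha, b, hb, c, hc, d, hd, h⟩ := h
  exact ⟨a, hAB ha, b, hAB hb, c, hAB hc, d, hAB hd, h⟩

theorem IsSeparation.forall_not_adj_of_not_hasTwoK2 (h : G.IsSeparation A B)
    (h2K2 : ¬G.HasTwoK2 (A ∪ B)) (hA : ∃ a ∈ A, ∃ b ∈ A, G.Adj a b) :
    ∀ x ∈ B, ∀ y ∈ B, ¬G.Adj x y := by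
  obtain ⟨a, ha, b, hb, hab⟩ := hA
  intro x hx y hy hxy
  exact h2K2 ⟨a, mem_union_left B ha, b, mem_union_left B hb, x, mem_union_right A hx,
    y, mem_union_right A hy, hab, hxy, h.not_adj a ha x hx, h.not_adj a ha y hy,
    h.not_adj b hb x hx, h.not_adj b hb y hy⟩

/-- co-2C₄ is the join of two copies of 2K₂ = C₄ᶜ. -/
theorem HasTwoK2.twoC4_compl_isIndContained (hA : G.HasTwoK2 A) (hB : G.HasTwoK2 B)
    (hjoin : ∀ x ∈ A, ∀ y ∈ B, G.Adj x y) : twoC4ᶜ ⊴ G := by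
  obtain ⟨a, ha, b, hb, c, hc, d, hd, hab, hcd, hac, had, hbc, hbd⟩ := hA
  obtain ⟨a', ha', b', hb', c', hc', d', hd', hab', hcd', hac', had', hbc', hbd'⟩ := hB
  have hjoin' : ∀ y ∈ B, ∀ x ∈ A, G.Adj y x := fun y hy x hx => (hjoin x hx y hy).symm
  refine isIndContained_of_adj_iff ![a, c, b, d, a', c', b', d'] (by decide) ?_
  intro i j
  fin_cases i <;> fin_cases j <;>
    simp +decide [*, hab.symm, hcd.symm, hab'.symm, hcd'.symm, G.adj_comm c a,
      G.adj_comm d a, G.adj_comm c b, G.adj_comm d b, G.adj_comm c' a', G.adj_comm d' a',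
      G.adj_comm c' b', G.adj_comm d' b']

end TwoK2

theorem IsSeparation.admitsOrder_isNbhdComplete {A B : Finset V} (h : G.IsSeparation A B)
    (hB : ∀ x ∈ B, ∀ y ∈ B, ¬G.Adj x y) (hA : A.AdmitsOrder G.IsNbhdComplete)
    (hB' : B.AdmitsOrder G.IsNbhdComplete) : (A ∪ B).AdmitsOrder G.IsNbhdComplete := by
  refine hA.union h.disjoint hB' fun v hv P hP _ => isNbhdComplete_of_forall_not_adj ?_
  rintro x (hx | hx) hvx
  exacts [h.not_adj x hx v hv hvx.symm, hB v hv x (hP hx) hvx]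

theorem admitsOrder_isNbhdComplete (hG : ¬pathGraph 4 ⊴ G) (s : Finset V)
    (hs : ¬G.HasTwoK2 s) : s.AdmitsOrder G.IsNbhdComplete := by
  induction s using induction_on_isSeparation hG with
  | small s hs1 =>
    exact .of_card_le_one (fun _ => isNbhdComplete_of_forall_not_adj fun _ => False.elim) hs1
  | sep A B h ihA ihB =>
    have hA := ihA fun h' => hs (h'.mono subset_union_left)
    have hB := ihB fun h' => hs (h'.mono subset_union_right)
    by_cases hedge : ∃ a ∈ A, ∃ b ∈ A, G.Adj a b
    · exact h.admitsOrder_isNbhdComplete (h.forall_not_adj_of_not_hasTwoK2 hs hedge) hA hB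
    · push Not at hedge
      rw [union_comm]
      exact h.symm.admitsOrder_isNbhdComplete hedge hB hA
  | join A B h ihA ihB =>
    exact (ihA fun h' => hs (h'.mono subset_union_left)).union h.disjoint
      (ihB fun h' => hs (h'.mono subset_union_right))
      fun v hv P hP hvP => hvP.union_of_adj (fun x hx y hy => h.adj_of_compl hx hy) hv hP

theorem admitsOrder_isNbhdModule (hG : ¬pathGraph 4 ⊴ G) (hco : ¬twoC4ᶜ ⊴ G)
    (s : Finset V) : s.AdmitsOrder G.IsNbhdModule := by
  induction s using induction_on_isSeparation hG with
  | small s hs1 => exact .of_card_le_one (fun _ _ h => False.elim h) hs1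
  | sep A B h hA hB =>
    exact hA.union h.disjoint hB fun v hv P hP hvP => hvP.union_of_not_adj h.not_adj hv hP
  | join A B h hA hB =>
    by_cases hB2 : G.HasTwoK2 B
    · have hA2 : ¬G.HasTwoK2 A := fun hA2 =>
        hco (hA2.twoC4_compl_isIndContained hB2 fun x hx y hy => h.adj_of_compl hx hy)
      rw [union_comm]
      exact hB.union h.disjoint.symm (admitsOrder_isNbhdComplete hG A hA2)
        fun v hv P hP hvP =>
          (hvP.union_of_adj (fun x hx y hy => h.symm.adj_of_compl hx hy) hv hP).isNbhdModule
    · exact hA.union h.disjoint (admitsOrder_isNbhdComplete hG B hB2)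
        fun v hv P hP hvP =>
          (hvP.union_of_adj (fun x hx y hy => h.adj_of_compl hx hy) hv hP).isNbhdModule

theorem moduleComposed_iff_admitsOrder [Fintype V] :
    G.ModuleComposed ↔ (univ : Finset V).AdmitsOrder G.IsNbhdModule := by
  constructor
  · rintro ⟨e, he⟩
    refine ⟨fun v => e.symm v, fun x _ y _ hxy => e.symm.injective (Fin.val_injective hxy), ?_⟩
    intro v _ a ha b hb c hc hva hvb hvc
    have hmem : ∀ x ∈ {x | x ∈ univ ∧ (e.symm x : ℕ) < e.symm v},
        x ∈ {x | ∃ j, j < e.symm v ∧ e j = x} :=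
      fun x hx => ⟨e.symm x, hx.2, e.apply_symm_apply x⟩
    exact he (e.symm v) ((Nat.zero_le _).trans_lt ha.2) ⟨a, hmem a ha⟩ (by simpa using hva)
      ⟨b, hmem b hb⟩ (by simpa using hvb) ⟨c, hmem c hc⟩ (by simpa using hvc)
  · rintro ⟨r, hr, hQ⟩
    let _ : LinearOrder V := LinearOrder.lift' r (by simpa using hr)
    let e := Fintype.orderIsoFinOfCardEq V rfl
    refine ⟨e.toEquiv, fun i _ a ha b hb c hc => ?_⟩
    have hlt : ∀ x : {v | ∃ j, j < i ∧ e.toEquiv j = v},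
        (x : V) ∈ {x | x ∈ univ ∧ r x < r (e i)} := by
      rintro ⟨_, j, hj, rfl⟩
      exact ⟨mem_univ _, e.strictMono hj⟩
    exact hQ (e i) (mem_univ _) a (hlt a) b (hlt b) c (hlt c) ha hb hc

theorem ModuleComposed.of_isIndContained [Fintype V] [Fintype W] {H : SimpleGraph W}
    (hG : G.ModuleComposed) (hHG : H ⊴ G) : H.ModuleComposed := by
  rw [moduleComposed_iff_admitsOrder] at hG ⊢
  obtain ⟨f⟩ := hHG
  obtain ⟨r, hr, hQ⟩ := hG
  refine ⟨r ∘ f, fun x _ y _ hxy => f.injective (hr (by simp) (by simp) hxy), ?_⟩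
  intro v _ a ha b hb c hc hva hvb hvc
  simpa only [f.map_adj_iff] using hQ (f v) (mem_univ _) (f a) ⟨mem_univ _, ha.2⟩
    (f b) ⟨mem_univ _, hb.2⟩ (f c) ⟨mem_univ _, hc.2⟩ (f.map_adj_iff.2 hva)
    (f.map_adj_iff.2 hvb) (mt f.map_adj_iff.1 hvc)

theorem not_moduleComposed_twoC4_compl : ¬twoC4ᶜ.ModuleComposed := by
  -- `a` lies in the other 4-cycle, `b` opposite to `v` and `c` next to `v`.
  have witness : ∀ v : Fin 8, ∃ a b c, twoC4ᶜ.Adj v a ∧ twoC4ᶜ.Adj v b ∧ ¬twoC4ᶜ.Adj v c ∧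
      c ≠ v ∧ twoC4ᶜ.Adj a c ∧ ¬twoC4ᶜ.Adj b c := by decide
  rw [moduleComposed_iff_admitsOrder]
  rintro ⟨r, hr, hQ⟩
  obtain ⟨v, -, hv⟩ := exists_max_image univ r univ_nonempty
  have hlt : ∀ x, x ≠ v → x ∈ {x | x ∈ univ ∧ r x < r v} := fun x hx =>
    ⟨mem_univ x, (hv x (mem_univ x)).lt_of_ne fun h => hx (hr (by simp) (by simp) h)⟩
  obtain ⟨a, b, c, hva, hvb, hvc, hcv, hac, hbc⟩ := witness v
  exact hbc ((hQ v (mem_univ v) a (hlt a hva.ne') b (hlt b hvb.ne') c (hlt c hcv)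
    hva hvb hvc).1 hac)

end SimpleGraph

/-- A cograph (a `P₄`-free graph) is module-composed iff it contains no
induced subgraph isomorphic to co-2C₄. -/
theorem cograph_moduleComposed_iff {V : Type*} [Fintype V] (G : SimpleGraph V)
    (hcograph : ¬ ∃ _f : SimpleGraph.pathGraph 4 ↪g G, True) :
    G.ModuleComposed ↔ ¬ ∃ _f : twoC4ᶜ ↪g G, True := by
  simp only [exists_true_iff_nonempty] at hcograph ⊢
  constructor
  · rintro hG ⟨f⟩
    exact SimpleGraph.not_moduleComposed_twoC4_compl (hG.of_isIndContained ⟨f⟩)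
  · intro hco
    exact G.moduleComposed_iff_admitsOrder.2
      (SimpleGraph.admitsOrder_isNbhdModule hcograph hco Finset.univ)
end

section
/- A bipartite graph G is module-composed if and only if G contains no induced domino and no induced hole (chordless cycle of length at least 5). -/
open scoped Classical

/-- The domino graph. -/
def domino : SimpleGraph (Fin 6) :=
  SimpleGraph.fromRel (fun a b =>
    (a, b) ∈ [((0 : Fin 6), (1 : Fin 6)), (1, 2), (2, 3), (3, 4), (4, 5), (5, 0), (0, 3)])

/-!
Peeling off the vertices of a module-composed graph from the end of its ordering shows that
`G` is module-composed iff every nonempty vertex set `s` contains a vertex whose neighbourhood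
in `s` is a module of the rest of `s`. No vertex of a domino or of a hole has this property.

Conversely, let `G` be bipartite, domino-free and hole-free, and layer its vertices by their
distance from a root `r`. Two vertices of a layer with a common neighbour in the next layer have
the same neighbours in the previous one: if they had no common lower neighbour, a shortest path
between their lower neighbourhoods inside the ball below them would close into a hole, and
otherwise (inductively) a missing edge yields a domino. Similarly, two vertices of the last layer
with a common neighbour have nested neighbourhoods, so a vertex of the last layer with the fewest
neighbours has a neighbourhood which is a module of the rest of the graph.
-/

namespace SimpleGraph

variable {V W : Type*} {G : SimpleGraph V} {H : SimpleGraph W}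

/-- `N(a) ∩ P` is a module of `G[P]`; one implication suffices as `x` and `y` are
interchangeable. -/
def NeighborModuleOn (G : SimpleGraph V) (a : V) (P : Set V) : Prop :=
  ∀ x ∈ P, ∀ y ∈ P, ∀ z ∈ P,
    G.Adj a x → G.Adj a y → ¬G.Adj a z → G.Adj x z → G.Adj y z

theorem isModule_induce_iff_neighborModuleOn {P : Set V} {a : V} :
    (G.induce P).IsModule {w : P | G.Adj a w} ↔ G.NeighborModuleOn a P := by
  refine ⟨fun h x hx y hy z hz hax hay haz ↦ (h ⟨x, hx⟩ hax ⟨y, hy⟩ hay ⟨z, hz⟩ haz).1,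
    fun h x hx y hy z hz ↦ ⟨h x x.2 y y.2 z z.2 hx hy hz, h y y.2 x x.2 z z.2 hy hx hz⟩⟩

theorem NeighborModuleOn.mono {a : V} {P Q : Set V} (h : G.NeighborModuleOn a Q) (hPQ : P ⊆ Q) :
    G.NeighborModuleOn a P :=
  fun x hx y hy z hz ↦ h x (hPQ hx) y (hPQ hy) z (hPQ hz)

theorem Embedding.neighborModuleOn_image_iff (f : H ↪g G) {a : W} {P : Set W} :
    G.NeighborModuleOn (f a) (f '' P) ↔ H.NeighborModuleOn a P := by
  simp [NeighborModuleOn]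

theorem moduleComposed_iff_exists_equiv [Fintype V] :
    G.ModuleComposed ↔
      ∃ e : Fin (Fintype.card V) ≃ V, ∀ i, G.NeighborModuleOn (e i) (e '' Set.Iio i) := by
  refine exists_congr fun e ↦
    ⟨fun h i ↦ ?_, fun h i _ ↦ isModule_induce_iff_neighborModuleOn.2 (h i)⟩
  by_cases hi : 0 < (i : ℕ)
  · exact isModule_induce_iff_neighborModuleOn.1 (h i hi)
  · rintro x ⟨j, hj, -⟩
    exact absurd (Fin.lt_def.1 hj) (by omega)

theorem ModuleComposed.exists_neighborModuleOn [Fintype V] (hG : G.ModuleComposed) {s : Set V}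
    (hs : s.Nonempty) : ∃ a ∈ s, G.NeighborModuleOn a (s \ {a}) := by
  obtain ⟨e, he⟩ := moduleComposed_iff_exists_equiv.1 hG
  obtain ⟨a, ha, hmax⟩ := s.exists_max_image e.symm s.toFinite hs
  have hmod := he (e.symm a)
  rw [e.apply_symm_apply] at hmod
  refine ⟨a, ha, hmod.mono ?_⟩
  rintro b ⟨hb, hba⟩
  exact ⟨e.symm b, (hmax b hb).lt_of_ne fun h ↦ hba (e.symm.injective h),
    e.apply_symm_apply b⟩

theorem exists_injective_neighborModuleOn
    (hG : ∀ s : Set V, s.Nonempty → ∃ a ∈ s, G.NeighborModuleOn a (s \ {a})) :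
    ∀ (n : ℕ) (s : Finset V), s.card = n → ∃ f : Fin n → V, Function.Injective f ∧
      Set.range f = s ∧ ∀ i, G.NeighborModuleOn (f i) (f '' Set.Iio i)
  | 0, s, hs =>
    ⟨Fin.elim0, Function.injective_of_subsingleton _, by simp_all, fun i ↦ i.elim0⟩
  | n + 1, s, hs => by
    obtain ⟨a, ha, hmod⟩ := hG s (by simpa using Finset.card_pos.1 (by omega))
    obtain ⟨f, hf, hrange, hfmod⟩ := exists_injective_neighborModuleOn hG n (s.erase a)
      (by rw [Finset.card_erase_of_mem ha, hs]; rfl)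
    refine ⟨Fin.snoc f a, Fin.snoc_injective_of_injective hf (by simp [hrange]),
      by simp [hrange, show a ∈ s from ha], fun i ↦ ?_⟩
    induction i using Fin.lastCases with
    | last =>
      refine (Fin.snoc_last (α := fun _ ↦ V) a f).symm ▸ hmod.mono ?_
      rintro _ ⟨i, hi, rfl⟩
      obtain ⟨j, rfl⟩ := Fin.exists_castSucc_eq.2 (Fin.ne_last_of_lt hi)
      simp [← Finset.coe_erase, ← hrange]
    | cast i =>
      simpa [← Fin.image_castSucc_Iio, Set.image_image] using hfmod i

theorem moduleComposed_iff_forall_exists_neighborModuleOn [Fintype V] :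
    G.ModuleComposed ↔
      ∀ s : Set V, s.Nonempty → ∃ a ∈ s, G.NeighborModuleOn a (s \ {a}) := by
  refine ⟨fun hG _ ↦ hG.exists_neighborModuleOn, fun hG ↦ ?_⟩
  obtain ⟨f, hf, hrange, hfmod⟩ := exists_injective_neighborModuleOn hG _ Finset.univ rfl
  let e := Equiv.ofBijective f ⟨hf, Set.range_eq_univ.1 (by simpa using hrange)⟩
  exact moduleComposed_iff_exists_equiv.2 ⟨e, hfmod⟩

theorem not_isIndContained_of_forall_not_neighborModuleOn [Nonempty W]
    (hG : ∀ s : Set V, s.Nonempty → ∃ a ∈ s, G.NeighborModuleOn a (s \ {a}))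
    (hH : ∀ c, ¬H.NeighborModuleOn c {c}ᶜ) : ¬H ⊴ G := by
  rintro ⟨f⟩
  obtain ⟨_, ⟨c, rfl⟩, hc⟩ := hG (Set.range f) (Set.range_nonempty f)
  rw [← Set.image_singleton, ← Set.image_compl_eq_range_sdiff_image f.injective] at hc
  exact hH c (f.neighborModuleOn_image_iff.1 hc)

theorem not_neighborModuleOn_compl {c x y z : W} (hzc : z ≠ c) (hx : H.Adj c x)
    (hy : H.Adj c y) (hz : ¬H.Adj c z) (hxz : H.Adj x z) (hyz : ¬H.Adj y z) :
    ¬H.NeighborModuleOn c {c}ᶜ :=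
  fun h ↦ hyz (h x hx.ne' y hy.ne' z hzc hx hy hz hxz)

instance : DecidableRel domino.Adj := fun a b ↦ decidable_of_iff' _ (fromRel_adj _ a b)

theorem domino_not_neighborModuleOn : ∀ c, ¬domino.NeighborModuleOn c {c}ᶜ := by
  unfold NeighborModuleOn
  decide

theorem cycleGraph_adj_iff_val {n : ℕ} {u v : Fin (n + 2)} :
    (cycleGraph (n + 2)).Adj u v ↔ (u : ℕ) + 1 = v ∨ (v : ℕ) + 1 = u ∨
      ((u : ℕ) = 0 ∧ (v : ℕ) = n + 1) ∨ ((v : ℕ) = 0 ∧ (u : ℕ) = n + 1) := by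
  have val_sub (a b : Fin (n + 2)) : ((a - b : Fin (n + 2)) : ℕ) =
      if b ≤ a then (a : ℕ) - b else n + 2 + a - b := by
    split_ifs with h
    exacts [Fin.sub_val_of_le h, Fin.coe_sub_iff_lt.2 (not_le.1 h)]
  rw [cycleGraph_adj', val_sub, val_sub]
  have := u.isLt
  have := v.isLt
  split_ifs <;> simp only [Fin.le_def] at * <;> omega

theorem cycleGraph_not_neighborModuleOn {n : ℕ} (hn : 5 ≤ n) (c : Fin n) :
    ¬(cycleGraph n).NeighborModuleOn c {c}ᶜ := by
  obtain ⟨m, rfl⟩ := Nat.exists_eq_add_of_le' hn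
  obtain ⟨k, hk⟩ := c
  refine not_neighborModuleOn_compl (x := ⟨k, hk⟩ + 1) (y := ⟨k, hk⟩ - 1)
    (z := ⟨k, hk⟩ + 1 + 1) ?_ ?_ ?_ ?_ ?_ ?_ <;>
    simp only [ne_eq, Fin.ext_iff, cycleGraph_adj_iff_val, Fin.val_add_one, Fin.coe_sub_one,
      Fin.val_last, Fin.val_zero] <;> split_ifs <;> simp_all <;> omega

theorem Walk.dist_getVert_getVert {u v : V} {p : G.Walk u v} (hp : p.length = G.dist u v)
    {i j : ℕ} (hij : i ≤ j) (hj : j ≤ p.length) :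
    G.dist (p.getVert i) (p.getVert j) = j - i := by
  have h := length_eq_dist_of_subwalk hp ((isSubwalk_take _ (j - i)).trans (isSubwalk_drop p i))
  rw [take_length, drop_length, drop_getVert, Nat.add_sub_cancel' hij] at h
  omega

theorem Walk.adj_getVert_iff {u v : V} {p : G.Walk u v} (hp : p.length = G.dist u v)
    {i j : ℕ} (hi : i ≤ p.length) (hj : j ≤ p.length) :
    G.Adj (p.getVert i) (p.getVert j) ↔ i + 1 = j ∨ j + 1 = i := by
  rw [← dist_eq_one_iff_adj]
  rcases le_total i j with hij | hij
  · rw [dist_getVert_getVert hp hij hj]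
    omega
  · rw [dist_comm, dist_getVert_getVert hp hij hi]
    omega

theorem Walk.getVert_injOn {u v : V} {p : G.Walk u v} (hp : p.length = G.dist u v) :
    Set.InjOn p.getVert (Set.Iic p.length) := by
  intro i hi j hj h
  have hd : G.dist (p.getVert i) (p.getVert j) = 0 := h ▸ dist_self
  rcases le_total i j with hij | hij
  · rw [dist_getVert_getVert hp hij hj] at hd
    omega
  · rw [dist_comm, dist_getVert_getVert hp hij hi] at hd
    omega

def Walk.pathGraphEmbedding {u v : V} (p : G.Walk u v) (hp : p.length = G.dist u v) :
    pathGraph (p.length + 1) ↪g G where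
  toFun i := p.getVert i
  inj' i j h := Fin.ext (getVert_injOn hp (Nat.le_of_lt_succ i.2) (Nat.le_of_lt_succ j.2) h)
  map_rel_iff' {i j} := by
    rw [pathGraph_adj]
    exact adj_getVert_iff hp (Nat.le_of_lt_succ i.2) (Nat.le_of_lt_succ j.2)

@[simp]
theorem Walk.pathGraphEmbedding_apply {u v : V} (p : G.Walk u v) (hp : p.length = G.dist u v)
    (i : Fin (p.length + 1)) : p.pathGraphEmbedding hp i = p.getVert i := rfl

theorem cycleGraph_isIndContained_of_pathGraph {n : ℕ} (f : pathGraph (n + 1) ↪g G) {w : V}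
    (hwf : w ∉ Set.range f) (hadj : ∀ i, G.Adj w (f i) ↔ i = 0 ∨ i = Fin.last n) :
    cycleGraph (n + 2) ⊴ G := by
  refine ⟨⟨⟨Fin.snoc f w, Fin.snoc_injective_of_injective f.injective hwf⟩,
    fun {a b} ↦ ?_⟩⟩
  simp only [Function.Embedding.coeFn_mk, cycleGraph_adj_iff_val]
  induction a using Fin.lastCases with
  | last =>
    induction b using Fin.lastCases with
    | last => simp
    | cast j =>
      simp only [Fin.snoc_last, Fin.snoc_castSucc, hadj, Fin.ext_iff, Fin.val_last,
        Fin.val_castSucc, Fin.val_zero, and_true]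
      omega
  | cast i =>
    induction b using Fin.lastCases with
    | last =>
      simp only [Fin.snoc_last, Fin.snoc_castSucc, G.adj_comm _ w, hadj, Fin.ext_iff,
        Fin.val_last, Fin.val_castSucc, Fin.val_zero, and_true]
      omega
    | cast j =>
      simp only [Fin.snoc_castSucc, f.map_adj_iff, pathGraph_adj, Fin.val_castSucc]
      omega

theorem domino_isIndContained (hG : G.CliqueFree 3) {a b c d e f : V}
    (hab : G.Adj a b) (hbc : G.Adj b c) (hcd : G.Adj c d) (hde : G.Adj d e) (hef : G.Adj e f)
    (hfa : G.Adj f a) (had : G.Adj a d) (hbe : ¬G.Adj b e) (hcf : ¬G.Adj c f) : domino ⊴ G := by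
  have triangle {x y z : V} (hxy : G.Adj x y) (hyz : G.Adj y z) : ¬G.Adj x z := fun hxz ↦
    hG {x, y, z} (is3Clique_triple_iff.2 ⟨hxy, hxz, hyz⟩)
  have hac := triangle hab hbc
  have hae := triangle had hde
  have hbd := triangle hab.symm had
  have hbf := triangle hab.symm hfa.symm
  have hce := triangle hcd hde
  have hdf := triangle had.symm hfa.symm
  let p : Fin 6 → V := ![a, b, c, d, e, f]
  have hp : ∀ i j, G.Adj (p i) (p j) ↔ domino.Adj i j := by
    intro i j
    fin_cases i <;> fin_cases j <;>
      simp [p, domino, G.adj_comm, hfa.symm, *]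
  have twin_free : ∀ i j, (∀ k, domino.Adj i k ↔ domino.Adj j k) → i = j := by decide
  refine ⟨⟨⟨p, fun i j hij ↦ twin_free i j fun k ↦ ?_⟩, hp _ _⟩⟩
  rw [← hp, ← hp]
  exact hij ▸ Iff.rfl

variable {r u v : V}

theorem Reachable.of_dist_eq_add_one {k : ℕ} (h : G.dist r v = k + 1) : G.Reachable r v :=
  .of_dist_ne_zero (by omega)

theorem dist_eq_add_one_or_of_adj (hG : G.Colorable 2) (hr : G.Reachable r u) (huv : G.Adj u v) :
    G.dist r v = G.dist r u + 1 ∨ G.dist r u = G.dist r v + 1 := by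
  have hne : G.dist r u ≠ G.dist r v := by
    intro h
    obtain ⟨p, hp⟩ := hr.exists_walk_length_eq_dist
    obtain ⟨q, hq⟩ := (hr.trans huv.reachable).exists_walk_length_eq_dist
    have := two_colorable_iff_forall_loop_even.1 hG r (p.append (q.reverse.cons huv))
    simp only [Walk.length_append, Walk.length_cons, Walk.length_reverse, hp, hq, h] at this
    rw [Nat.even_iff] at this
    omega
  rcases huv.diff_dist_adj (u := r) with h | h | h <;> omega

theorem not_adj_of_dist_ne (hG : G.Colorable 2) (hr : G.Reachable r u)
    (h₁ : G.dist r v ≠ G.dist r u + 1) (h₂ : G.dist r u ≠ G.dist r v + 1) : ¬G.Adj u v :=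
  fun huv ↦ (dist_eq_add_one_or_of_adj hG hr huv).elim h₁ h₂

theorem exists_adj_dist_add_one_eq (hu : G.dist r u ≠ 0) :
    ∃ z, G.Adj z u ∧ G.dist r z + 1 = G.dist r u := by
  obtain ⟨p, hp⟩ := exists_walk_of_dist_ne_zero hu
  have hlen : p.length - 1 + 1 = p.length := by omega
  refine ⟨p.getVert (p.length - 1), ?_, ?_⟩
  · simpa [hlen] using p.adj_getVert_succ (i := p.length - 1) (by omega)
  · have := Walk.dist_getVert_getVert hp (Nat.zero_le (p.length - 1)) (by omega)
    rw [Walk.getVert_zero] at this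
    omega

theorem reachable_induce_of_dist_le {S : Set V} {k : ℕ}
    (hS : ∀ v, G.Reachable r v → G.dist r v < k → v ∈ S) (hu : G.Reachable r u)
    (hv : G.Reachable r v) (huk : G.dist r u ≤ k) (hvk : G.dist r v ≤ k) (huS : u ∈ S)
    (hvS : v ∈ S) : (G.induce S).Reachable ⟨u, huS⟩ ⟨v, hvS⟩ := by
  have hsupp {x : V} (p : G.Walk r x) (hp : p.length = G.dist r x) (hxk : G.dist r x ≤ k)
      (hxS : x ∈ S) : ∀ y ∈ p.support, y ∈ S := by
    intro y hy
    obtain ⟨i, rfl, hi⟩ := Walk.mem_support_iff_exists_getVert.1 hy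
    rcases hi.lt_or_eq with hi | rfl
    · have := Walk.dist_getVert_getVert hp (Nat.zero_le i) hi.le
      rw [Walk.getVert_zero] at this
      exact hS _ (p.take i).reachable (by omega)
    · rwa [Walk.getVert_length]
  obtain ⟨p, hp⟩ := hu.exists_walk_length_eq_dist
  obtain ⟨q, hq⟩ := hv.exists_walk_length_eq_dist
  exact (p.induce S (hsupp p hp huk huS)).reachable.symm.trans
    (q.induce S (hsupp q hq hvk hvS)).reachable

theorem cycleGraph_isIndContained_of_walk_induce {S : Set V} {x y w : V} {hx : x ∈ S}
    {hy : y ∈ S} (q : (G.induce S).Walk ⟨x, hx⟩ ⟨y, hy⟩)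
    (hq : q.length = (G.induce S).dist ⟨x, hx⟩ ⟨y, hy⟩)
    (hwS : w ∉ S) (hw : ∀ v ∈ S, G.Adj w v ↔ v = x ∨ v = y) :
    cycleGraph (q.length + 2) ⊴ G := by
  let f := (Embedding.induce S).comp (q.pathGraphEmbedding hq)
  have hf0 : f 0 = x := by simp [f]
  have hflast : f (Fin.last q.length) = y := by simp [f]
  refine cycleGraph_isIndContained_of_pathGraph f (w := w) ?_ fun i ↦ ?_
  · rintro ⟨i, rfl⟩
    exact hwS (q.getVert i).2
  rw [hw (f i) (q.getVert i).2, ← f.injective.eq_iff (b := 0),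
    ← f.injective.eq_iff (b := Fin.last _), hf0, hflast]

theorem exists_common_lower_neighbor (hG : G.Colorable 2)
    (hhole : ∀ n, 5 ≤ n → ¬cycleGraph n ⊴ G)
    {x y w : V} {k : ℕ} (hx : G.dist r x = k + 1) (hy : G.dist r y = k + 1)
    (hw : G.dist r w = k + 2) (hwx : G.Adj w x) (hwy : G.Adj w y) :
    ∃ s, G.Adj x s ∧ G.Adj y s ∧ G.dist r s = k := by
  by_contra! hcap
  -- A shortest `x`–`y` path through the ball of radius `k` closes up with `w` into a hole.
  have hrx := Reachable.of_dist_eq_add_one hx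
  have hrw := Reachable.of_dist_eq_add_one hw
  let S : Set V := {v | G.Reachable r v ∧ G.dist r v ≤ k} ∪ {x, y}
  have hxS : x ∈ S := .inr (.inl rfl)
  have hyS : y ∈ S := .inr (.inr rfl)
  have hreach : (G.induce S).Reachable ⟨x, hxS⟩ ⟨y, hyS⟩ :=
    reachable_induce_of_dist_le (k := k + 1) (fun v hv hvk ↦ .inl ⟨hv, by omega⟩) hrx
      (.of_dist_eq_add_one hy) hx.le hy.le hxS hyS
  obtain ⟨q, hq⟩ := hreach.exists_walk_length_eq_dist
  have hlen : 2 < q.length := by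
    rw [hq, ← Nat.cast_lt (α := ℕ∞), hreach.coe_dist_eq_edist, Nat.cast_ofNat,
      two_lt_edist_iff]
    refine ⟨fun hxy ↦ ?_, fun hxy ↦ not_adj_of_dist_ne hG hrx (v := y) (by omega) (by omega) hxy,
      Set.eq_empty_of_forall_notMem fun ⟨m, hmS⟩ hm ↦ ?_⟩
    · obtain ⟨z, hzx, hz⟩ := exists_adj_dist_add_one_eq (show G.dist r x ≠ 0 by omega)
      obtain rfl : x = y := Subtype.mk_eq_mk.1 hxy
      exact hcap z hzx.symm hzx.symm (by omega)
    · obtain ⟨hxm, hym⟩ : G.Adj x m ∧ G.Adj y m := (mem_commonNeighbors _).1 hm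
      rcases hmS with ⟨hrm, hmk⟩ | rfl | rfl
      · have := dist_eq_add_one_or_of_adj hG hrm hxm.symm
        exact hcap m hxm hym (by omega)
      exacts [hxm.ne rfl, hym.ne rfl]
  refine hhole (q.length + 2) (by omega)
    (cycleGraph_isIndContained_of_walk_induce q hq (w := w) ?_ ?_)
  · rintro (⟨-, hwk⟩ | rfl | rfl) <;> omega
  · rintro v (⟨hrv, hvk⟩ | rfl | rfl)
    · refine iff_of_false (not_adj_of_dist_ne hG hrw (by omega) (by omega)) ?_
      rintro (rfl | rfl) <;> omega
    exacts [iff_of_true hwx (.inl rfl), iff_of_true hwy (.inr rfl)]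

theorem adj_of_adj_of_common_upper_neighbor (hG : G.Colorable 2) (hdom : ¬domino ⊴ G)
    (hhole : ∀ n, 5 ≤ n → ¬cycleGraph n ⊴ G) {k : ℕ} {x y w z : V} (hz : G.dist r z = k)
    (hx : G.dist r x = k + 1) (hy : G.dist r y = k + 1) (hw : G.dist r w = k + 2)
    (hwx : G.Adj w x) (hwy : G.Adj w y) (hxz : G.Adj x z) : G.Adj y z := by
  induction k generalizing x y w z with
  | zero =>
    obtain ⟨s, hxs, hys, hs⟩ := exists_common_lower_neighbor hG hhole hx hy hw hwx hwy
    have hrx := Reachable.of_dist_eq_add_one hx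
    rwa [← (hrx.trans hxz.reachable).dist_eq_zero_iff.1 hz,
      (hrx.trans hxs.reachable).dist_eq_zero_iff.1 hs]
  | succ k ih =>
    obtain ⟨s, hxs, hys, hs⟩ := exists_common_lower_neighbor hG hhole hx hy hw hwx hwy
    obtain ⟨t, htz, ht⟩ := exists_adj_dist_add_one_eq (show G.dist r z ≠ 0 by omega)
    have hst : G.Adj s t := ih (by omega) hz hs (by omega) hxz hxs htz.symm
    have hrt := (Reachable.of_dist_eq_add_one hz).trans htz.symm.reachable
    by_contra hyz
    -- `s t z x w y` is a domino with chord `sx`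
    exact hdom (domino_isIndContained (hG.cliqueFree (by norm_num)) hst htz hxz.symm hwx.symm hwy
      hys hxs.symm (not_adj_of_dist_ne hG hrt (by omega) (by omega)) fun h ↦ hyz h.symm)

theorem dist_eq_of_adj_of_forall_dist_le (hG : G.Colorable 2) {k : ℕ}
    (hmax : ∀ v, G.dist r v ≤ k + 1) (hu : G.dist r u = k + 1) (huv : G.Adj u v) :
    G.dist r v = k := by
  have := dist_eq_add_one_or_of_adj hG (.of_dist_eq_add_one hu) huv
  have := hmax v
  omega

theorem neighborSet_subset_or_subset (hG : G.Colorable 2) (hdom : ¬domino ⊴ G)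
    (hhole : ∀ n, 5 ≤ n → ¬cycleGraph n ⊴ G) {k : ℕ} (hmax : ∀ v, G.dist r v ≤ k + 1)
    {x y u : V} (hx : G.dist r x = k + 1) (hy : G.dist r y = k + 1) (hxu : G.Adj x u)
    (hyu : G.Adj y u) :
    G.neighborSet x ⊆ G.neighborSet y ∨ G.neighborSet y ⊆ G.neighborSet x := by
  have lower {v t : V} : G.dist r v = k + 1 → G.Adj v t → G.dist r t = k :=
    dist_eq_of_adj_of_forall_dist_le hG hmax
  rw [or_iff_not_and_not, Set.not_subset, Set.not_subset]
  rintro ⟨⟨a, hxa, hya⟩, c, hyc, hxc⟩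
  have ha := lower hx hxa
  have hu := lower hx hxu
  have hra := (Reachable.of_dist_eq_add_one hx).trans hxa.reachable
  rcases k with _ | k
  · have hru := (Reachable.of_dist_eq_add_one hx).trans hxu.reachable
    rw [← hra.dist_eq_zero_iff.1 ha, hru.dist_eq_zero_iff.1 hu] at hya
    exact hya hyu
  obtain ⟨t, hta, ht⟩ := exists_adj_dist_add_one_eq (show G.dist r a ≠ 0 by omega)
  have hut : G.Adj u t :=
    adj_of_adj_of_common_upper_neighbor hG hdom hhole (w := x) (by omega) ha hu hx hxa hxu hta.symm
  have hct : G.Adj c t :=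
    adj_of_adj_of_common_upper_neighbor hG hdom hhole (w := y) (by omega) hu (lower hy hyc) hy
      hyu hyc hut
  -- `u x a t c y` is a domino with chord `ut`
  exact hdom (domino_isIndContained (hG.cliqueFree (by norm_num)) hxu.symm hxa hta.symm hct.symm
    hyc.symm hyu hut hxc fun h ↦ hya h.symm)

theorem exists_neighborModuleOn_compl [Finite V] [Nonempty V] (hG : G.Colorable 2)
    (hdom : ¬domino ⊴ G) (hhole : ∀ n, 5 ≤ n → ¬cycleGraph n ⊴ G) :
    ∃ v, G.NeighborModuleOn v {v}ᶜ := by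
  let r : V := Classical.arbitrary V
  obtain ⟨v₀, hv₀⟩ := Finite.exists_max (G.dist r)
  rcases hk : G.dist r v₀ with _ | k
  · refine ⟨r, fun x _ _ _ _ _ hrx _ _ _ ↦ ?_⟩
    have := hv₀ x
    rw [dist_eq_one_iff_adj.2 hrx, hk] at this
    omega
  have hmax : ∀ u, G.dist r u ≤ k + 1 := hk ▸ hv₀
  obtain ⟨v, hv : G.dist r v = k + 1, hmin⟩ := Set.exists_min_image {v | G.dist r v = k + 1}
    (fun v ↦ (G.neighborSet v).ncard) (Set.toFinite _) ⟨v₀, hk⟩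
  refine ⟨v, fun x _ y _ z hzv hvx hvy hvz hxz ↦ ?_⟩
  have hx := dist_eq_of_adj_of_forall_dist_le hG hmax hv hvx
  have hy := dist_eq_of_adj_of_forall_dist_le hG hmax hv hvy
  have hrx := (Reachable.of_dist_eq_add_one hv).trans hvx.reachable
  rcases dist_eq_add_one_or_of_adj hG hrx hxz with hz | hz
  · rcases neighborSet_subset_or_subset hG hdom hhole hmax (hx ▸ hz) hv hxz.symm hvx with h | h
    · have hzv : G.neighborSet z = G.neighborSet v :=
        Set.eq_of_subset_of_ncard_le h (hmin z (hx ▸ hz))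
      exact (show y ∈ G.neighborSet z from hzv ▸ hvy).symm
    · exact (h hvy).symm
  · exact adj_of_adj_of_common_upper_neighbor (r := r) hG hdom hhole rfl hz (by omega) (by omega)
      hvx hvy hxz

theorem exists_neighborModuleOn_diff [Finite V] (hG : G.Colorable 2) (hdom : ¬domino ⊴ G)
    (hhole : ∀ n, 5 ≤ n → ¬cycleGraph n ⊴ G) {s : Set V} (hs : s.Nonempty) :
    ∃ a ∈ s, G.NeighborModuleOn a (s \ {a}) := by
  have : Nonempty s := hs.to_subtype
  have hind : G.induce s ⊴ G := ⟨Embedding.induce s⟩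
  obtain ⟨a, ha⟩ := exists_neighborModuleOn_compl (hG.of_hom (Embedding.induce s).toHom)
    (fun h ↦ hdom (h.trans hind)) (fun n hn h ↦ hhole n hn (h.trans hind))
  rw [← (Embedding.induce s).neighborModuleOn_image_iff,
    Set.image_compl_eq_range_sdiff_image (Embedding.induce s).injective] at ha
  rw [show Set.range (Embedding.induce s (G := G)) = s from Subtype.range_coe] at ha
  exact ⟨a, a.2, by simpa using ha⟩

end SimpleGraph

/-- A bipartite graph is module-composed iff it contains no induced domino
and no induced hole (chordless cycle on at least 5 vertices). -/
theorem bipartite_moduleComposed_iff_domino_hole_free {V : Type*} [Fintype V]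
    (G : SimpleGraph V) (hbip : G.Colorable 2) :
    G.ModuleComposed ↔
      (¬ ∃ _f : domino ↪g G, True) ∧
      (∀ n, 5 ≤ n → ¬ ∃ _f : SimpleGraph.cycleGraph n ↪g G, True) := by
  simp only [exists_true_iff_nonempty,
    SimpleGraph.moduleComposed_iff_forall_exists_neighborModuleOn]
  refine ⟨fun h ↦ ⟨?_, fun n hn ↦ ?_⟩, fun ⟨hdom, hhole⟩ _ ↦
    SimpleGraph.exists_neighborModuleOn_diff hbip hdom hhole⟩
  · exact SimpleGraph.not_isIndContained_of_forall_not_neighborModuleOn h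
      SimpleGraph.domino_not_neighborModuleOn
  · have : Nonempty (Fin n) := ⟨⟨0, by omega⟩⟩
    exact SimpleGraph.not_isIndContained_of_forall_not_neighborModuleOn h
      (SimpleGraph.cycleGraph_not_neighborModuleOn hn)
end
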